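/- In any B_{q,t}-module datum, for all m, k ∈ ℤ the following identity of operators V₁ → V₁ holds: z₁^{m} φ (d₋ T₁^{−1} z₁^{k} d₊) = (d₋ T₁^{−1} z₁^{k} d₊) z₁^{m} φ − q^{−1}(1−q)·d₋ (z₁z₂)^{k} h_{m−k−1}(z₁,z₂) z₁ d₊ φ, where in each summand d₊ maps V₁ → V₂, the operators T₁, z₁, z₂ and h_{m−k−1}(z₁,z₂) in the middle act on V₂, d₋ maps V₂ → V₁, and the outer z₁^{m}, φ act on V₁. -/
import Mathlib


/- Common setup: the field K = ℚ(q,t) and the notion of a B_{q,t}-module datum,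
i.e. a family of K-vector spaces V_k (k ≥ 0) together with maps d₊ : V_k → V_{k+1},
d₋ : V_k → V_{k−1}, invertible operators z_i (1 ≤ i ≤ k) and operators T_i
(1 ≤ i ≤ k−1) on V_k (the T_i are invertible as a consequence of the quadratic
Hecke relation, so we record them as units), subject to the defining relations
of the double Dyck path algebra 𝔹_{q,t}.  Operators compose right-to-left;
`Module.End` multiplication is composition. -/

noncomputable section

/-- The field ℚ(q,t). -/
abbrev Kq : Type := FractionRing (MvPolynomial (Fin 2) ℚ)

/-- The variable q ∈ ℚ(q,t). -/
def qv : Kq := algebraMap (MvPolynomial (Fin 2) ℚ) Kq (MvPolynomial.X 0)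

/-- The variable t ∈ ℚ(q,t). -/
def tv : Kq := algebraMap (MvPolynomial (Fin 2) ℚ) Kq (MvPolynomial.X 1)

/-- φ := (q−1)^{−1}(d₊d₋ − d₋d₊), an operator on V_{k+1}. -/
def phiE {V : ℕ → Type*} [∀ k, AddCommGroup (V k)] [∀ k, Module Kq (V k)]
    (dp : ∀ k, V k →ₗ[Kq] V (k + 1)) (dm : ∀ k, V (k + 1) →ₗ[Kq] V k) (k : ℕ) :
    Module.End Kq (V (k + 1)) :=
  (qv - 1)⁻¹ • (dp k ∘ₗ dm k - dm (k + 1) ∘ₗ dp (k + 1))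

/-- A B_{q,t}-module datum on the family of K-vector spaces `V`.
`z k i` is the operator z_i on V_k (meaningful for 1 ≤ i ≤ k) and `T k i` is
the operator T_i on V_k (meaningful for 1 ≤ i ≤ k−1); all relations are imposed
on every V_k on which all their factors are defined. -/
structure BqtDatum (V : ℕ → Type*) [∀ k, AddCommGroup (V k)] [∀ k, Module Kq (V k)] where
  /-- d₊ : V_k → V_{k+1} -/
  dp : ∀ k, V k →ₗ[Kq] V (k + 1)
  /-- d₋ : V_{k+1} → V_k -/
  dm : ∀ k, V (k + 1) →ₗ[Kq] V k
  /-- the pairwise commuting invertible operators z_1, …, z_k on V_k -/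
  z : ∀ k, ℕ → (Module.End Kq (V k))ˣ
  /-- the operators T_1, …, T_{k−1} on V_k -/
  T : ∀ k, ℕ → (Module.End Kq (V k))ˣ
  z_comm : ∀ k i j, 1 ≤ i → i ≤ k → 1 ≤ j → j ≤ k → z k i * z k j = z k j * z k i
  hecke : ∀ k i, 1 ≤ i → i + 1 ≤ k →
    ((T k i : Module.End Kq (V k)) - 1) * ((T k i : Module.End Kq (V k)) + qv • 1) = 0
  braid : ∀ k i, 1 ≤ i → i + 2 ≤ k →
    T k i * T k (i + 1) * T k i = T k (i + 1) * T k i * T k (i + 1)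
  T_far : ∀ k i j, 1 ≤ i → i + 1 ≤ k → 1 ≤ j → j + 1 ≤ k → i + 1 < j →
    T k i * T k j = T k j * T k i
  TzT : ∀ k i, 1 ≤ i → i + 1 ≤ k →
    (((T k i)⁻¹ : (Module.End Kq (V k))ˣ) : Module.End Kq (V k)) *
        (z k (i + 1) : Module.End Kq (V k)) *
        (((T k i)⁻¹ : (Module.End Kq (V k))ˣ) : Module.End Kq (V k)) =
      qv⁻¹ • (z k i : Module.End Kq (V k))
  zT_far : ∀ k i j, 1 ≤ i → i ≤ k → 1 ≤ j → j + 1 ≤ k → i ≠ j → i ≠ j + 1 →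
    z k i * T k j = T k j * z k i
  dmdmT : ∀ k, (dm k ∘ₗ dm (k + 1)) ∘ₗ (T (k + 2) (k + 1) : Module.End Kq (V (k + 2))) =
    dm k ∘ₗ dm (k + 1)
  dmT : ∀ k i, 1 ≤ i → i + 1 ≤ k →
    dm k ∘ₗ (T (k + 1) i : Module.End Kq (V (k + 1))) = (T k i : Module.End Kq (V k)) ∘ₗ dm k
  Tdpdp : ∀ k, (T (k + 2) 1 : Module.End Kq (V (k + 2))) ∘ₗ (dp (k + 1) ∘ₗ dp k) =
    dp (k + 1) ∘ₗ dp k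
  dpT : ∀ k i, 1 ≤ i → i + 1 ≤ k →
    dp k ∘ₗ (T k i : Module.End Kq (V k)) = (T (k + 1) (i + 1) : Module.End Kq (V (k + 1))) ∘ₗ dp k
  phidm : ∀ k, qv • (phiE dp dm k ∘ₗ dm (k + 1)) =
    (dm (k + 1) ∘ₗ phiE dp dm (k + 1)) ∘ₗ (T (k + 2) (k + 1) : Module.End Kq (V (k + 2)))
  Tphidp : ∀ k, (T (k + 2) 1 : Module.End Kq (V (k + 2))) ∘ₗ (phiE dp dm (k + 1) ∘ₗ dp (k + 1)) =
    qv • (dp (k + 1) ∘ₗ phiE dp dm k)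
  zdm : ∀ k i, 1 ≤ i → i ≤ k →
    (z k i : Module.End Kq (V k)) ∘ₗ dm k = dm k ∘ₗ (z (k + 1) i : Module.End Kq (V (k + 1)))
  dpz : ∀ k i, 1 ≤ i → i ≤ k →
    dp k ∘ₗ (z k i : Module.End Kq (V k)) = (z (k + 1) (i + 1) : Module.End Kq (V (k + 1))) ∘ₗ dp k
  zmain : ∀ k, (z (k + 1) 1 : Module.End Kq (V (k + 1))) ∘ₗ
      (qv • (dp k ∘ₗ dm k) - dm (k + 1) ∘ₗ dp (k + 1)) =
    (qv * tv) • ((dp k ∘ₗ dm k - dm (k + 1) ∘ₗ dp (k + 1)) ∘ₗ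
      (z (k + 1) (k + 1) : Module.End Kq (V (k + 1))))

namespace BqtDatum

variable {V : ℕ → Type*} [∀ k, AddCommGroup (V k)] [∀ k, Module Kq (V k)]

/-- e_m := d₋ z₁^m d₊ : V₀ → V₀. -/
def eOp (D : BqtDatum V) (m : ℤ) : Module.End Kq (V 0) :=
  D.dm 0 ∘ₗ ((D.z 1 1 ^ m : (Module.End Kq (V 1))ˣ) : Module.End Kq (V 1)) ∘ₗ D.dp 0

end BqtDatum

namespace BqtDatum

variable {V : ℕ → Type*} [∀ k, AddCommGroup (V k)] [∀ k, Module Kq (V k)]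

/-- h_{m−1}(z₁,z₂) as an operator on V₂: Σ_{s=0}^{m−1} z₁^{m−1−s} z₂^s for m > 0,
0 for m = 0, and −(z₁z₂)^m Σ_{s=0}^{−m−1} z₁^{−m−1−s} z₂^s for m < 0; equivalently
(z₁ − z₂)·h_{m−1}(z₁,z₂) = z₁^m − z₂^m. -/
def hOp (D : BqtDatum V) (m : ℤ) : Module.End Kq (V 2) :=
  if 0 < m then
    ∑ s ∈ Finset.range m.toNat,
      ((D.z 2 1 ^ (m - 1 - (s : ℤ)) * D.z 2 2 ^ (s : ℤ) : (Module.End Kq (V 2))ˣ) :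
        Module.End Kq (V 2))
  else if m = 0 then 0
  else
    -((((D.z 2 1 * D.z 2 2) ^ m : (Module.End Kq (V 2))ˣ) : Module.End Kq (V 2)) *
      ∑ s ∈ Finset.range (-m).toNat,
        ((D.z 2 1 ^ (-m - 1 - (s : ℤ)) * D.z 2 2 ^ (s : ℤ) : (Module.End Kq (V 2))ˣ) :
          Module.End Kq (V 2)))

end BqtDatum


/-! ### Auxiliary lemmas for Statement 14 -/

section Stmt14Aux

lemma qv_ne_zero : qv ≠ 0 := by
  intro h
  have h' : algebraMap (MvPolynomial (Fin 2) ℚ) Kq (MvPolynomial.X 0) = 0 := h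
  exact MvPolynomial.X_ne_zero (R := ℚ) (0 : Fin 2) (IsFractionRing.to_map_eq_zero_iff.mp h')

section conj

variable {M N : Type*} [AddCommGroup M] [Module Kq M] [AddCommGroup N] [Module Kq N]

private lemma conj_pow_aux (f : M →ₗ[Kq] N) (u : (Module.End Kq M)ˣ) (w : (Module.End Kq N)ˣ)
    (h : ∀ x, f ((u : Module.End Kq M) x) = (w : Module.End Kq N) (f x)) (n : ℕ) :
    ∀ x, f (((u ^ n : (Module.End Kq M)ˣ) : Module.End Kq M) x)
      = ((w ^ n : (Module.End Kq N)ˣ) : Module.End Kq N) (f x) := by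
  induction n with
  | zero => intro x; simp
  | succ n ih =>
    intro x
    rw [pow_succ, Units.val_mul, Module.End.mul_apply, ih, h, pow_succ, Units.val_mul,
      Module.End.mul_apply]

private lemma conj_inv_aux (f : M →ₗ[Kq] N) (u : (Module.End Kq M)ˣ) (w : (Module.End Kq N)ˣ)
    (h : ∀ x, f ((u : Module.End Kq M) x) = (w : Module.End Kq N) (f x)) :
    ∀ x, f (((u⁻¹ : (Module.End Kq M)ˣ) : Module.End Kq M) x)
      = ((w⁻¹ : (Module.End Kq N)ˣ) : Module.End Kq N) (f x) := by
  intro x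
  have h1 : (u : Module.End Kq M) (((u⁻¹ : (Module.End Kq M)ˣ) : Module.End Kq M) x) = x := by
    rw [← Module.End.mul_apply, Units.mul_inv, Module.End.one_apply]
  have h2 := h (((u⁻¹ : (Module.End Kq M)ˣ) : Module.End Kq M) x)
  rw [h1] at h2
  have h3 : ((w⁻¹ : (Module.End Kq N)ˣ) : Module.End Kq N)
      ((w : Module.End Kq N) (f (((u⁻¹ : (Module.End Kq M)ˣ) : Module.End Kq M) x)))
      = f (((u⁻¹ : (Module.End Kq M)ˣ) : Module.End Kq M) x) := by
    rw [← Module.End.mul_apply, Units.inv_mul, Module.End.one_apply]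
  rw [← h2] at h3
  exact h3.symm

lemma conj_zpow14 (f : M →ₗ[Kq] N) (u : (Module.End Kq M)ˣ) (w : (Module.End Kq N)ˣ)
    (h : f ∘ₗ (u : Module.End Kq M) = (w : Module.End Kq N) ∘ₗ f) (m : ℤ) :
    ∀ x, f (((u ^ m : (Module.End Kq M)ˣ) : Module.End Kq M) x)
      = ((w ^ m : (Module.End Kq N)ˣ) : Module.End Kq N) (f x) := by
  have h' : ∀ x, f ((u : Module.End Kq M) x) = (w : Module.End Kq N) (f x) := fun x => by
    simpa using LinearMap.congr_fun h x
  intro x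
  match m with
  | Int.ofNat n => simpa [zpow_natCast] using conj_pow_aux f u w h' n x
  | Int.negSucc n =>
    have hinv := conj_inv_aux f (u ^ (n + 1)) (w ^ (n + 1)) (conj_pow_aux f u w h' (n + 1))
    simpa [zpow_negSucc] using hinv x

end conj

namespace BqtDatum

variable {V : ℕ → Type*} [∀ k, AddCommGroup (V k)] [∀ k, Module Kq (V k)] (D : BqtDatum V)

local notation "uT" => ((D.T 2 1 : (Module.End Kq (V 2))ˣ) : Module.End Kq (V 2))
local notation "uTi" => (((D.T 2 1)⁻¹ : (Module.End Kq (V 2))ˣ) : Module.End Kq (V 2))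
local notation "z₁e" => ((D.z 2 1 : (Module.End Kq (V 2))ˣ) : Module.End Kq (V 2))
local notation "z₂e" => ((D.z 2 2 : (Module.End Kq (V 2))ˣ) : Module.End Kq (V 2))
local notation "zp1[" a "]" =>
  ((D.z 2 1 ^ (a : ℤ) : (Module.End Kq (V 2))ˣ) : Module.End Kq (V 2))
local notation "zp2[" a "]" =>
  ((D.z 2 2 ^ (a : ℤ) : (Module.End Kq (V 2))ˣ) : Module.End Kq (V 2))
local notation "zz[" a "]" =>
  (((D.z 2 1 * D.z 2 2) ^ (a : ℤ) : (Module.End Kq (V 2))ˣ) : Module.End Kq (V 2))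

lemma zcommU : Commute (D.z 2 1) (D.z 2 2) :=
  D.z_comm 2 1 2 le_rfl one_le_two one_le_two le_rfl

lemma zcommE : Commute z₁e z₂e := (zcommU D).map (Units.coeHom _)

lemma heckE : uT * uT = (1 - qv) • uT + qv • (1 : Module.End Kq (V 2)) := by
  have h := D.hecke 2 1 le_rfl le_rfl
  have h2 : (uT - 1) * (uT + qv • (1 : Module.End Kq (V 2)))
      = uT * uT + qv • uT - uT - qv • (1 : Module.End Kq (V 2)) := by
    rw [sub_mul, mul_add, mul_add, one_mul, mul_smul_comm, mul_one, mul_smul_comm, mul_one]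
    abel
  have h' : uT * uT + qv • uT - uT - qv • (1 : Module.End Kq (V 2)) = 0 := by rw [← h2, h]
  refine eq_of_sub_eq_zero ?_
  calc uT * uT - ((1 - qv) • uT + qv • (1 : Module.End Kq (V 2)))
      = uT * uT + qv • uT - uT - qv • (1 : Module.End Kq (V 2)) := by
        rw [sub_smul, one_smul]; abel
    _ = 0 := h'

lemma qvTinv : qv • uTi = uT + (qv - 1) • (1 : Module.End Kq (V 2)) := by
  have h1 : uT * (uT + (qv - 1) • (1 : Module.End Kq (V 2)))
      = qv • (1 : Module.End Kq (V 2)) := by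
    rw [mul_add, heckE, mul_smul_comm, mul_one, sub_smul, sub_smul, one_smul]
    abel
  calc qv • uTi = uTi * (qv • (1 : Module.End Kq (V 2))) := by rw [mul_smul_comm, mul_one]
    _ = uTi * (uT * (uT + (qv - 1) • (1 : Module.End Kq (V 2)))) := by rw [h1]
    _ = uT + (qv - 1) • (1 : Module.End Kq (V 2)) := by
        rw [← mul_assoc, Units.inv_mul, one_mul]

lemma uzu : uT * z₁e * uT = qv • z₂e := by
  have h := D.TzT 2 1 le_rfl le_rfl
  have h2 := congrArg (fun x => uT * x * uT) h
  simp only [mul_assoc, smul_mul_assoc, mul_smul_comm, Units.mul_inv_cancel_left,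
    Units.inv_mul_cancel_left, Units.inv_mul, Units.mul_inv, mul_one, one_mul] at h2
  rw [mul_assoc, h2, smul_smul, mul_inv_cancel₀ qv_ne_zero, one_smul]

lemma Tzq : uT * z₁e = qv • (z₂e * uTi) := by
  have h := congrArg (fun x => x * uTi) (uzu D)
  simpa only [mul_assoc, Units.mul_inv, mul_one, smul_mul_assoc] using h

lemma zTq : z₁e * uT = qv • (uTi * z₂e) := by
  have h := congrArg (fun x => uTi * x) (uzu D)
  simpa only [← mul_assoc, Units.inv_mul, one_mul, mul_smul_comm,
    Units.inv_mul_cancel_left] using h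

lemma Tz : uT * z₁e = z₂e * uT + (qv - 1) • z₂e := by
  rw [Tzq, ← mul_smul_comm, qvTinv, mul_add, mul_smul_comm, mul_one]

lemma zT : z₁e * uT = uT * z₂e + (qv - 1) • z₂e := by
  rw [zTq, ← smul_mul_assoc, qvTinv, add_mul, smul_mul_assoc, one_mul]

lemma uz2 : uT * z₂e = z₁e * uT - (qv - 1) • z₂e := by rw [zT]; abel

lemma z2u : z₂e * uT = uT * z₁e - (qv - 1) • z₂e := by rw [Tz]; abel

lemma TinvZ2 : uTi * z₂e = qv⁻¹ • (z₁e * uT) := by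
  rw [zTq, smul_smul, inv_mul_cancel₀ qv_ne_zero, one_smul]

lemma Tzz : Commute (D.T 2 1) (D.z 2 1 * D.z 2 2) := by
  apply Units.ext
  show uT * (z₁e * z₂e) = (z₁e * z₂e) * uT
  calc uT * (z₁e * z₂e) = (uT * z₁e) * z₂e := by rw [mul_assoc]
    _ = (z₂e * uT + (qv - 1) • z₂e) * z₂e := by rw [Tz]
    _ = z₂e * (uT * z₂e) + (qv - 1) • (z₂e * z₂e) := by
        rw [add_mul, smul_mul_assoc, mul_assoc]
    _ = z₂e * (z₁e * uT - (qv - 1) • z₂e) + (qv - 1) • (z₂e * z₂e) := by rw [uz2]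
    _ = (z₂e * z₁e) * uT := by
        rw [mul_sub, mul_smul_comm, ← mul_assoc]; abel
    _ = (z₁e * z₂e) * uT := by rw [(zcommE D).symm.eq]


lemma unit_mono_succ₁ (a s : ℤ) :
    (D.z 2 1 ^ a * D.z 2 2 ^ s) * D.z 2 1 = D.z 2 1 ^ (a + 1) * D.z 2 2 ^ s := by
  rw [mul_assoc, ((zcommU D).symm.zpow_left s).eq, ← mul_assoc, ← zpow_add_one]

lemma unit_mono_succ₂ (a s : ℤ) :
    (D.z 2 1 ^ a * D.z 2 2 ^ s) * D.z 2 2 = D.z 2 1 ^ a * D.z 2 2 ^ (s + 1) := by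
  rw [mul_assoc, ← zpow_add_one]

/-- `posH D p` = h_{p-1}(z₁,z₂) = Σ_{s<p} z₁^{p-1-s} z₂^s on V₂. -/
def posH (p : ℕ) : Module.End Kq (V 2) :=
  ∑ s ∈ Finset.range p,
    ((D.z 2 1 ^ ((p : ℤ) - 1 - (s : ℤ)) * D.z 2 2 ^ (s : ℤ) : (Module.End Kq (V 2))ˣ) :
      Module.End Kq (V 2))

lemma posH_zero : posH D 0 = 0 := by simp [posH]

lemma posH_succ₁ (p : ℕ) :
    posH D (p + 1) = posH D p * z₁e + zp2[(p : ℤ)] := by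
  rw [posH, posH, Finset.sum_range_succ, Finset.sum_mul]
  congr 1
  · refine Finset.sum_congr rfl fun s hs => ?_
    have e1 : ((p + 1 : ℕ) : ℤ) - 1 - (s : ℤ) = ((p : ℤ) - 1 - (s : ℤ)) + 1 := by
      push_cast; ring
    rw [← Units.val_mul, unit_mono_succ₁, e1]
  · have he : ((p + 1 : ℕ) : ℤ) - 1 - (p : ℤ) = 0 := by push_cast; ring
    rw [he, zpow_zero, one_mul]

lemma posH_succ₂ (p : ℕ) :
    posH D (p + 1) = posH D p * z₂e + zp1[(p : ℤ)] := by
  rw [posH, posH, Finset.sum_range_succ', Finset.sum_mul]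
  congr 1
  · refine Finset.sum_congr rfl fun s hs => ?_
    have e1 : ((p + 1 : ℕ) : ℤ) - 1 - ((s + 1 : ℕ) : ℤ) = (p : ℤ) - 1 - (s : ℤ) := by
      push_cast; ring
    have e2 : ((s + 1 : ℕ) : ℤ) = (s : ℤ) + 1 := by push_cast; ring
    rw [← Units.val_mul, unit_mono_succ₂, e1, e2]
  · have he : ((p + 1 : ℕ) : ℤ) - 1 - ((0 : ℕ) : ℤ) = (p : ℤ) := by push_cast; ring
    rw [he]
    norm_num

lemma commute_unit_posH (a : (Module.End Kq (V 2))ˣ)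
    (h1 : Commute a (D.z 2 1)) (h2 : Commute a (D.z 2 2)) (p : ℕ) :
    Commute ((a : Module.End Kq (V 2))) (posH D p) := by
  apply Commute.sum_right
  intro s _
  exact ((h1.zpow_right _).mul_right (h2.zpow_right _)).map (Units.coeHom _)

lemma z1_posH (p : ℕ) : z₁e * posH D p = posH D p * z₁e :=
  (commute_unit_posH D (D.z 2 1) (Commute.refl _) (zcommU D) p).eq

lemma z2_posH (p : ℕ) : z₂e * posH D p = posH D p * z₂e :=
  (commute_unit_posH D (D.z 2 2) (zcommU D).symm (Commute.refl _) p).eq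

lemma zp1_posH (c : ℤ) (p : ℕ) : zp1[c] * posH D p = posH D p * zp1[c] :=
  (commute_unit_posH D (D.z 2 1 ^ c) ((Commute.refl _).zpow_left c)
    ((zcommU D).zpow_left c) p).eq

lemma zp2_posH (c : ℤ) (p : ℕ) : zp2[c] * posH D p = posH D p * zp2[c] :=
  (commute_unit_posH D (D.z 2 2 ^ c) ((zcommU D).symm.zpow_left c)
    ((Commute.refl _).zpow_left c) p).eq

lemma zz_posH (c : ℤ) (p : ℕ) : zz[c] * posH D p = posH D p * zz[c] :=
  (commute_unit_posH D ((D.z 2 1 * D.z 2 2) ^ c)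
    (((Commute.refl (D.z 2 1)).mul_left (zcommU D).symm).zpow_left c)
    (((zcommU D).mul_left (Commute.refl (D.z 2 2))).zpow_left c) p).eq

lemma zp1_cast_succ (n : ℕ) : zp1[((n + 1 : ℕ) : ℤ)] = zp1[(n : ℤ)] * z₁e := by
  have e : ((n + 1 : ℕ) : ℤ) = (n : ℤ) + 1 := by push_cast; ring
  rw [e, ← Units.val_mul, ← zpow_add_one]

lemma zp1_cast_succ' (n : ℕ) : zp1[((n + 1 : ℕ) : ℤ)] = z₁e * zp1[(n : ℤ)] := by
  have e : ((n + 1 : ℕ) : ℤ) = 1 + (n : ℤ) := by push_cast; ring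
  rw [e, ← Units.val_mul, ← zpow_one_add]

lemma zp2_cast_succ (n : ℕ) : zp2[((n + 1 : ℕ) : ℤ)] = zp2[(n : ℤ)] * z₂e := by
  have e : ((n + 1 : ℕ) : ℤ) = (n : ℤ) + 1 := by push_cast; ring
  rw [e, ← Units.val_mul, ← zpow_add_one]

lemma zp2_cast_succ' (n : ℕ) : zp2[((n + 1 : ℕ) : ℤ)] = z₂e * zp2[(n : ℤ)] := by
  have e : ((n + 1 : ℕ) : ℤ) = 1 + (n : ℤ) := by push_cast; ring
  rw [e, ← Units.val_mul, ← zpow_one_add]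

lemma zp2_mul_z2 (n : ℤ) : zp2[n] * z₂e = z₂e * zp2[n] := by
  have e : n + 1 = 1 + n := by ring
  rw [← Units.val_mul, ← Units.val_mul, ← zpow_add_one, e, zpow_one_add]

lemma FLnat (n : ℕ) :
    uT * zp1[(n : ℤ)] = zp2[(n : ℤ)] * uT + (qv - 1) • (z₂e * posH D n) := by
  induction n with
  | zero => simp [posH_zero]
  | succ n ih =>
    have step := congrArg (fun x => x * z₁e) ih
    simp only [add_mul, smul_mul_assoc, mul_assoc] at step
    rw [Tz, mul_add, mul_smul_comm] at step
    rw [zp1_cast_succ, step, zp2_cast_succ, posH_succ₁, mul_add z₂e, smul_add,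
      ← mul_assoc (zp2[(n : ℤ)]) z₂e uT, zp2_mul_z2]
    abel

lemma FRnat (n : ℕ) :
    zp1[(n : ℤ)] * uT = uT * zp2[(n : ℤ)] + (qv - 1) • (z₂e * posH D n) := by
  induction n with
  | zero => simp [posH_zero]
  | succ n ih =>
    have step := congrArg (fun x => z₁e * x) ih
    simp only [mul_add, mul_smul_comm] at step
    have swap : z₁e * (z₂e * posH D n) = z₂e * (posH D n * z₁e) := by
      rw [← mul_assoc, (zcommE D).eq, mul_assoc, z1_posH]
    rw [zp1_cast_succ', mul_assoc, step, swap, ← mul_assoc z₁e uT, zT, add_mul,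
      smul_mul_assoc, zp2_cast_succ', posH_succ₁, mul_add z₂e, smul_add,
      mul_assoc uT z₂e]
    abel

lemma TposH (n : ℕ) : uT * posH D n = posH D n * uT := by
  induction n with
  | zero => simp [posH_zero]
  | succ n ih =>
    calc uT * posH D (n + 1) = uT * (posH D n * z₂e) + uT * zp1[(n : ℤ)] := by
          rw [posH_succ₂, mul_add]
      _ = posH D n * (uT * z₂e) + (zp2[(n : ℤ)] * uT + (qv - 1) • (z₂e * posH D n)) := by
          rw [← mul_assoc, ih, mul_assoc, FLnat]
      _ = posH D n * z₁e * uT + zp2[(n : ℤ)] * uT := by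
          rw [uz2, mul_sub, mul_smul_comm, z2_posH, ← mul_assoc]
          abel
      _ = (posH D n * z₁e + zp2[(n : ℤ)]) * uT := by rw [add_mul]
      _ = posH D (n + 1) * uT := by rw [posH_succ₁]


lemma hOp_nonneg (n : ℤ) (hn : 0 ≤ n) : hOp D n = posH D n.toNat := by
  rcases eq_or_lt_of_le hn with h0 | hpos
  · rw [hOp, if_neg (by omega), if_pos (by omega), posH]
    rw [show n.toNat = 0 by omega]
    simp
  · rw [hOp, if_pos hpos, posH]
    refine Finset.sum_congr rfl fun s hs => ?_
    rw [Int.toNat_of_nonneg hn]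

lemma hOp_neg (n : ℤ) (hn : n < 0) :
    hOp D n = -(zz[n] * posH D (-n).toNat) := by
  rw [hOp, if_neg (by omega), if_neg (by omega), posH]
  congr 2
  refine Finset.sum_congr rfl fun s hs => ?_
  rw [Int.toNat_of_nonneg (by omega : (0 : ℤ) ≤ -n)]

lemma zp_inv_cancel₁ (n : ℤ) : zp1[-n] * zp1[n] = (1 : Module.End Kq (V 2)) := by
  rw [← Units.val_mul, ← zpow_add]
  norm_num

lemma zp_inv_cancel₂ (n : ℤ) : zp2[n] * zp2[-n] = (1 : Module.End Kq (V 2)) := by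
  rw [← Units.val_mul, ← zpow_add]
  norm_num

lemma zp2_mul_zp1 (n : ℤ) : zp2[n] * zp1[n] = zz[n] := by
  rw [← Units.val_mul]
  congr 1
  rw [(zcommU D).mul_zpow, ((zcommU D).zpow_zpow n n).eq]

lemma FLint (n : ℤ) :
    uT * zp1[n] = zp2[n] * uT + (qv - 1) • (z₂e * hOp D n) := by
  rcases le_or_gt 0 n with hn | hn
  · rw [hOp_nonneg D n hn]
    have h := FLnat D n.toNat
    rwa [Int.toNat_of_nonneg hn] at h
  · rw [hOp_neg D n hn]
    have hpz : (((-n).toNat : ℕ) : ℤ) = -n := Int.toNat_of_nonneg (by omega)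
    have hF := FLnat D (-n).toNat
    rw [hpz] at hF
    have rearr : zp2[n] * (z₂e * posH D (-n).toNat) * zp1[n]
        = z₂e * (zz[n] * posH D (-n).toNat) := by
      calc zp2[n] * (z₂e * posH D (-n).toNat) * zp1[n]
          = ((z₂e * zp2[n]) * posH D (-n).toNat) * zp1[n] := by
            rw [← mul_assoc (zp2[n]) z₂e, zp2_mul_z2]
        _ = (z₂e * (posH D (-n).toNat * zp2[n])) * zp1[n] := by
            rw [mul_assoc z₂e, zp2_posH]
        _ = z₂e * (posH D (-n).toNat * (zp2[n] * zp1[n])) := by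
            rw [mul_assoc z₂e, mul_assoc (posH D (-n).toNat)]
        _ = z₂e * (zz[n] * posH D (-n).toNat) := by
            rw [zp2_mul_zp1, ← zz_posH]
    have wayB : zp2[n] * (uT * zp1[-n]) * zp1[n] = zp2[n] * uT := by
      rw [mul_assoc (zp2[n]), mul_assoc uT, zp_inv_cancel₁, mul_one]
    have wayA : zp2[n] * (uT * zp1[-n]) * zp1[n]
        = uT * zp1[n] + (qv - 1) • (z₂e * (zz[n] * posH D (-n).toNat)) := by
      rw [hF, mul_add, add_mul, mul_smul_comm, smul_mul_assoc]
      congr 1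
      · rw [← mul_assoc (zp2[n]), zp_inv_cancel₂, one_mul]
      · rw [rearr]
    have key := wayA.symm.trans wayB
    rw [mul_neg, smul_neg, ← key]
    abel

lemma TcommZZ (c : ℤ) : uT * zz[c] = zz[c] * uT :=
  (((Tzz D).zpow_right c).map (Units.coeHom _)).eq

lemma TicommZZ (c : ℤ) : uTi * zz[c] = zz[c] * uTi :=
  ((((Tzz D).zpow_right c).inv_left).map (Units.coeHom _)).eq

lemma z1commZZ (c : ℤ) : z₁e * zz[c] = zz[c] * z₁e :=
  ((((Commute.refl (D.z 2 1)).mul_right (zcommU D)).zpow_right c).map (Units.coeHom _)).eq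

lemma TcommH (n : ℤ) : uT * hOp D n = hOp D n * uT := by
  rcases le_or_gt 0 n with hn | hn
  · rw [hOp_nonneg D n hn]
    exact TposH D n.toNat
  · rw [hOp_neg D n hn, mul_neg, neg_mul, ← mul_assoc, TcommZZ, mul_assoc, TposH, ← mul_assoc]

lemma z1commH (n : ℤ) : z₁e * hOp D n = hOp D n * z₁e := by
  rcases le_or_gt 0 n with hn | hn
  · rw [hOp_nonneg D n hn]
    exact z1_posH D n.toNat
  · rw [hOp_neg D n hn, mul_neg, neg_mul, ← mul_assoc, z1commZZ, mul_assoc, z1_posH,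
      ← mul_assoc]

lemma ulem1 (m c : ℤ) :
    (D.z 2 1 * D.z 2 2) ^ c * D.z 2 1 ^ (m - c) = D.z 2 1 ^ m * D.z 2 2 ^ c := by
  rw [(zcommU D).mul_zpow, mul_assoc, ((zcommU D).symm.zpow_zpow c (m - c)).eq, ← mul_assoc,
    ← zpow_add, show c + (m - c) = m by ring]

lemma ulem2 (m c : ℤ) :
    (D.z 2 1 * D.z 2 2) ^ c * D.z 2 2 ^ (m - c) = D.z 2 1 ^ c * D.z 2 2 ^ m := by
  rw [(zcommU D).mul_zpow, mul_assoc, ← zpow_add, show c + (m - c) = m by ring]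

lemma mainE (m k : ℤ) :
    zp1[m] * zp2[k] * uTi
      = uTi * (zp1[k] * zp2[m]) - (qv⁻¹ * (1 - qv)) • (zz[k] * hOp D (m - k) * z₁e) := by
  have s1 : zp1[m - k] * uTi
      = uTi * zp2[m - k] + (qv - 1) • (uTi * (z₂e * hOp D (m - k)) * uTi) := by
    calc zp1[m - k] * uTi = uTi * (uT * zp1[m - k]) * uTi := by
          rw [Units.inv_mul_cancel_left]
      _ = uTi * (zp2[m - k] * uT + (qv - 1) • (z₂e * hOp D (m - k))) * uTi := by rw [FLint]
      _ = uTi * zp2[m - k] + (qv - 1) • (uTi * (z₂e * hOp D (m - k)) * uTi) := by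
          rw [mul_add, add_mul, mul_smul_comm, smul_mul_assoc]
          congr 1
          rw [mul_assoc, mul_assoc (zp2[m - k]), Units.mul_inv, mul_one]
  have s2 : uTi * (z₂e * hOp D (m - k)) * uTi = qv⁻¹ • (hOp D (m - k) * z₁e) := by
    calc uTi * (z₂e * hOp D (m - k)) * uTi
        = ((qv⁻¹ • (z₁e * uT)) * hOp D (m - k)) * uTi := by
          rw [← mul_assoc uTi z₂e, TinvZ2]
      _ = qv⁻¹ • (((z₁e * uT) * hOp D (m - k)) * uTi) := by
          rw [smul_mul_assoc, smul_mul_assoc]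
      _ = qv⁻¹ • ((z₁e * (hOp D (m - k) * uT)) * uTi) := by
          rw [mul_assoc z₁e uT, TcommH]
      _ = qv⁻¹ • ((z₁e * hOp D (m - k)) * (uT * uTi)) := by
          rw [← mul_assoc z₁e, mul_assoc (z₁e * hOp D (m - k))]
      _ = qv⁻¹ • (hOp D (m - k) * z₁e) := by
          rw [Units.mul_inv, mul_one, z1commH]
  have s1' : zp1[m - k] * uTi
      = uTi * zp2[m - k] + ((qv - 1) * qv⁻¹) • (hOp D (m - k) * z₁e) := by
    rw [s1, s2, smul_smul]
  have c1 : zz[k] * zp1[m - k] = zp1[m] * zp2[k] := by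
    rw [← Units.val_mul, ← Units.val_mul, ulem1]
  have c2 : zz[k] * zp2[m - k] = zp1[k] * zp2[m] := by
    rw [← Units.val_mul, ← Units.val_mul, ulem2]
  calc zp1[m] * zp2[k] * uTi
      = zz[k] * (zp1[m - k] * uTi) := by rw [← c1, mul_assoc]
    _ = zz[k] * (uTi * zp2[m - k])
        + ((qv - 1) * qv⁻¹) • (zz[k] * (hOp D (m - k) * z₁e)) := by
        rw [s1', mul_add, mul_smul_comm]
    _ = uTi * (zp1[k] * zp2[m]) + ((qv - 1) * qv⁻¹) • (zz[k] * hOp D (m - k) * z₁e) := by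
        rw [← mul_assoc (zz[k]) uTi, ← TicommZZ, mul_assoc uTi, c2, ← mul_assoc (zz[k])]
    _ = uTi * (zp1[k] * zp2[m]) - (qv⁻¹ * (1 - qv)) • (zz[k] * hOp D (m - k) * z₁e) := by
        rw [show (qv - 1) * qv⁻¹ = -(qv⁻¹ * (1 - qv)) by ring, neg_smul]
        abel


lemma phiz (b : ℤ) :
    phiE D.dp D.dm 1 * zp1[b] = zp2[b] * phiE D.dp D.dm 1 := by
  have base : SemiconjBy (phiE D.dp D.dm 1) z₁e z₂e := by
    show phiE D.dp D.dm 1 * z₁e = z₂e * phiE D.dp D.dm 1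
    have h1 : (D.dp 1 ∘ₗ D.dm 1) * z₁e = z₂e * (D.dp 1 ∘ₗ D.dm 1) := by
      have a1 : D.dm 1 ∘ₗ (z₁e : Module.End Kq (V 2)) =
          (D.z 1 1 : Module.End Kq (V 1)) ∘ₗ D.dm 1 := (D.zdm 1 1 le_rfl le_rfl).symm
      have a2 := D.dpz 1 1 le_rfl le_rfl
      rw [Module.End.mul_eq_comp, Module.End.mul_eq_comp, LinearMap.comp_assoc, a1,
        ← LinearMap.comp_assoc, a2, LinearMap.comp_assoc]
    have h2 : (D.dm 2 ∘ₗ D.dp 2) * z₁e = z₂e * (D.dm 2 ∘ₗ D.dp 2) := by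
      have a1 := D.dpz 2 1 le_rfl one_le_two
      have a2 : D.dm 2 ∘ₗ (D.z 3 2 : Module.End Kq (V 3)) =
          (D.z 2 2 : Module.End Kq (V 2)) ∘ₗ D.dm 2 := (D.zdm 2 2 one_le_two le_rfl).symm
      rw [Module.End.mul_eq_comp, Module.End.mul_eq_comp, LinearMap.comp_assoc, a1,
        ← LinearMap.comp_assoc, a2, LinearMap.comp_assoc]
    rw [phiE, smul_mul_assoc, mul_smul_comm]
    congr 1
    rw [sub_mul, mul_sub, h1, h2]
  exact base.units_zpow_right b

lemma hTTi : ∀ x : V 2, uT (uTi x) = x := fun x => by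
  rw [← Module.End.mul_apply, Units.mul_inv, Module.End.one_apply]

lemma hTiT : ∀ x : V 2, uTi (uT x) = x := fun x => by
  rw [← Module.End.mul_apply, Units.inv_mul, Module.End.one_apply]

lemma hphidm : ∀ x : V 2,
    phiE D.dp D.dm 0 (D.dm 1 x) = qv⁻¹ • D.dm 1 (phiE D.dp D.dm 1 (uT x)) := by
  intro x
  have h := LinearMap.congr_fun (D.phidm 0) x
  simp only [LinearMap.smul_apply, LinearMap.comp_apply] at h
  rw [← h, smul_smul, inv_mul_cancel₀ qv_ne_zero, one_smul]

lemma hphidp : ∀ x : V 1,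
    phiE D.dp D.dm 1 (D.dp 1 x) = qv • uTi (D.dp 1 (phiE D.dp D.dm 0 x)) := by
  intro x
  have h := LinearMap.congr_fun (D.Tphidp 0) x
  simp only [LinearMap.smul_apply, LinearMap.comp_apply] at h
  have h2 := congrArg (fun y => uTi y) h
  simp only [map_smul] at h2
  rw [← h2, hTiT]

lemma hzdm (c : ℤ) : ∀ x : V 2,
    ((D.z 1 1 ^ c : (Module.End Kq (V 1))ˣ) : Module.End Kq (V 1)) (D.dm 1 x)
      = D.dm 1 (zp1[c] x) := fun x =>
  (conj_zpow14 (D.dm 1) (D.z 2 1) (D.z 1 1) (D.zdm 1 1 le_rfl le_rfl).symm c x).symm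

lemma hdpz (c : ℤ) : ∀ x : V 1,
    D.dp 1 (((D.z 1 1 ^ c : (Module.End Kq (V 1))ˣ) : Module.End Kq (V 1)) x)
      = zp2[c] (D.dp 1 x) :=
  conj_zpow14 (D.dp 1) (D.z 1 1) (D.z 2 2) (D.dpz 1 1 le_rfl le_rfl) c

lemma hphz (c : ℤ) : ∀ x : V 2,
    phiE D.dp D.dm 1 (zp1[c] x) = zp2[c] (phiE D.dp D.dm 1 x) := fun x => by
  simpa only [Module.End.mul_apply] using LinearMap.congr_fun (phiz D c) x

end BqtDatum

end Stmt14Aux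
open BqtDatum in
/-- z₁^m φ (d₋ T₁⁻¹ z₁^k d₊) = (d₋ T₁⁻¹ z₁^k d₊) z₁^m φ
− q⁻¹(1−q)·d₋ (z₁z₂)^k h_{m−k−1}(z₁,z₂) z₁ d₊ φ as operators V₁ → V₁. -/
theorem stmt14 (V : ℕ → Type*) [∀ k, AddCommGroup (V k)] [∀ k, Module Kq (V k)]
    (D : BqtDatum V) (m k : ℤ) :
    (((D.z 1 1 ^ m : (Module.End Kq (V 1))ˣ) : Module.End Kq (V 1)) * phiE D.dp D.dm 0) *
      (D.dm 1 ∘ₗ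
        ((((D.T 2 1)⁻¹ : (Module.End Kq (V 2))ˣ) : Module.End Kq (V 2)) *
          ((D.z 2 1 ^ k : (Module.End Kq (V 2))ˣ) : Module.End Kq (V 2))) ∘ₗ D.dp 1) =
    (D.dm 1 ∘ₗ
        ((((D.T 2 1)⁻¹ : (Module.End Kq (V 2))ˣ) : Module.End Kq (V 2)) *
          ((D.z 2 1 ^ k : (Module.End Kq (V 2))ˣ) : Module.End Kq (V 2))) ∘ₗ D.dp 1) *
      (((D.z 1 1 ^ m : (Module.End Kq (V 1))ˣ) : Module.End Kq (V 1)) * phiE D.dp D.dm 0) -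
    (qv⁻¹ * (1 - qv)) •
      ((D.dm 1 ∘ₗ
          ((((D.z 2 1 * D.z 2 2) ^ k : (Module.End Kq (V 2))ˣ) : Module.End Kq (V 2)) *
            hOp D (m - k) * (D.z 2 1 : Module.End Kq (V 2))) ∘ₗ D.dp 1) ∘ₗ
        phiE D.dp D.dm 0) := by
  apply LinearMap.ext
  intro v
  simp only [Module.End.mul_apply, LinearMap.comp_apply, LinearMap.sub_apply,
    LinearMap.smul_apply]
  rw [hphidm D, hTTi D, hphz D k, hphidp D]
  simp only [map_smul]
  rw [smul_smul, inv_mul_cancel₀ qv_ne_zero, one_smul]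
  rw [hzdm D m, hdpz D m]
  have hm := LinearMap.congr_fun (mainE D m k) (D.dp 1 (phiE D.dp D.dm 0 v))
  simp only [Module.End.mul_apply, LinearMap.sub_apply, LinearMap.smul_apply] at hm
  rw [hm, map_sub, map_smul]

end
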